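/- arXiv:2407.09764 — 2 statements merged into one kernel-verified Lean document; each statement's English description precedes it below -/
import Mathlib

section
/- Let F be an algebraically closed field of characteristic 2, let m ≥ 1, and let λ = (λ_1, …, λ_{2m+1}) ∈ F^{2m+1} with λ_{2m+1} ≠ 0. Consider the subspace D_λ of derivations ψ of h_m satisfying [g, ψ(g)] = ψ(g^{[2]}) for all g ∈ h_m; this subspace contains all inner derivations. Then the quotient space D_λ / Inn(h_m) (which is the restricted cohomology H¹_*(h_m^λ(2), h_m^λ(2))) has dimension 2m² − m over F. -/
/-!
Let `z = e_{2m+1}`, which spans the centre. Evaluating `[g, ψ g] = ψ(g^{[2]})` at `g = z` gives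
`λ_{2m+1} ψ(z) = 0`, so `ψ(z) = 0`; as every `g^{[2]}` is a multiple of `z`, `D_λ` is then the
space of derivations with `ψ(z) = 0` and `[g, ψ g] = 0` for all `g`. Recording the `z`-coefficient
of `[e_i, ψ e_j]` for `i, j ≤ 2m` gives an alternating matrix. It vanishes exactly when `ψ` maps
into `Fz`, and every linear map into `Fz` killing `z` is some `ad h`, because `[e_i, -]` reads off
the coordinate of index `i ± m`; so the kernel is `Inn(h_m)`. In characteristic `2` every
alternating matrix occurs: an alternating matrix makes `[g, ψ g]` vanish, and polarising this
yields the Leibniz rule. Hence `D_λ / Inn(h_m)` is the space of alternating `2m × 2m` matrices,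
of dimension `(2m choose 2) = 2m² - m`.
-/

open Finset

section AlternatingMatrices

variable (R ι : Type*) [CommRing R]

def alternatingMatrices : Submodule R (Matrix ι ι R) where
  carrier := {A | (∀ i j, A i j = -A j i) ∧ ∀ i, A i i = 0}
  add_mem' := by
    rintro A B ⟨hA, hA'⟩ ⟨hB, hB'⟩
    exact ⟨fun i j => by simp [hA i j, hB i j, add_comm], fun i => by simp [hA', hB']⟩
  zero_mem' := by simp
  smul_mem' := by
    rintro c A ⟨hA, hA'⟩
    exact ⟨fun i j => by simp [hA i j], fun i => by simp [hA']⟩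

variable {R ι} [LinearOrder ι]

def alternatingMatricesEquiv :
    alternatingMatrices R ι ≃ₗ[R] ({p : ι × ι // p.1 < p.2} → R) where
  toFun A p := (A : Matrix ι ι R) p.1.1 p.1.2
  map_add' _ _ := rfl
  map_smul' _ _ := rfl
  invFun f := ⟨Matrix.of fun i j =>
      if h : i < j then f ⟨(i, j), h⟩ else if h' : j < i then -f ⟨(j, i), h'⟩ else 0,
    fun i j => by
      rcases lt_trichotomy i j with h | rfl | h
      · simp [h, h.not_gt]
      · simp
      · simp [h, h.not_gt],
    fun i => by simp⟩
  left_inv A := by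
    obtain ⟨hskew, hdiag⟩ := A.2
    ext i j
    rcases lt_trichotomy i j with h | rfl | h
    · simp [h]
    · simp [hdiag]
    · simp [h, h.not_gt, hskew j i]
  right_inv f := by
    ext p
    simp [p.2]

theorem finrank_alternatingMatrices {K : Type*} [Field K] [Fintype ι] :
    Module.finrank K (alternatingMatrices K ι) = (Fintype.card ι).choose 2 := by
  rw [alternatingMatricesEquiv.finrank_eq, Module.finrank_pi, Fintype.card_subtype,
    Fintype.card_product_filter_lt]

end AlternatingMatrices

theorem sum_sum_eq_zero_of_alternating {ι M : Type*} [Fintype ι] [AddCommGroup M]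
    (f : ι → ι → M) (hskew : ∀ i j, f i j = -f j i) (hdiag : ∀ i, f i i = 0) :
    ∑ i, ∑ j, f i j = 0 := by
  rw [← sum_product']
  refine sum_ninvolution Prod.swap (fun p => by simp [hskew p.1 p.2]) (fun p hp => ?_)
    (fun _ => mem_univ _) Prod.swap_swap
  intro h
  exact hp (by rw [show p.2 = p.1 from congrArg Prod.fst h]; exact hdiag _)

theorem neg_eq_self_of_charTwo (R : Type*) {M : Type*} [Ring R] [CharP R 2] [AddCommGroup M]
    [Module R M] (v : M) : -v = v := by
  rw [← neg_one_smul R v, CharTwo.neg_eq, one_smul]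

section LieAlgebra

variable {R L : Type*} [CommRing R] [LieRing L] [LieAlgebra R L]

theorem lie_apply_self_eq_zero_of_basis {ι : Type*} [Fintype ι] (b : Module.Basis ι R L)
    (f : L →ₗ[R] L) (hskew : ∀ i j, ⁅b i, f (b j)⁆ = -⁅b j, f (b i)⁆)
    (hdiag : ∀ i, ⁅b i, f (b i)⁆ = 0) (g : L) : ⁅g, f g⁆ = 0 := by
  conv_lhs => rw [← b.sum_repr g]
  simp only [map_sum, map_smul, sum_lie, lie_sum, smul_lie, lie_smul, smul_sum]
  refine sum_sum_eq_zero_of_alternating _ (fun i j => ?_) (fun i => by simp [hdiag])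
  rw [hskew, smul_neg, smul_neg, smul_comm]

theorem lie_apply_eq_neg_of_lie_apply_self_eq_zero {f : L →ₗ[R] L}
    (hself : ∀ g, ⁅g, f g⁆ = 0) (x y : L) : ⁅x, f y⁆ = -⁅y, f x⁆ := by
  have hpolar := hself (x + y)
  rw [map_add, lie_add, add_lie, add_lie, hself, hself, zero_add, add_zero] at hpolar
  exact eq_neg_of_add_eq_zero_right hpolar

theorem leibniz_of_lie_apply_self_eq_zero [CharP R 2] {f : L →ₗ[R] L}
    (hf : ∀ x y : L, f ⁅x, y⁆ = 0) (hself : ∀ g, ⁅g, f g⁆ = 0) (x y : L) :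
    f ⁅x, y⁆ = ⁅x, f y⁆ - ⁅y, f x⁆ := by
  rw [hf, lie_apply_eq_neg_of_lie_apply_self_eq_zero hself, neg_eq_self_of_charTwo R, sub_self]

end LieAlgebra

namespace Module.Basis

variable {R M : Type*} [Semiring R] [AddCommMonoid M] [Module R M] {n : ℕ}
  (b : Module.Basis (Fin (n + 1)) R M)

theorem eq_repr_last_smul_of_repr_castSucc_eq_zero {v : M}
    (hv : ∀ k : Fin n, b.repr v k.castSucc = 0) :
    v = b.repr v (Fin.last n) • b (Fin.last n) := by
  conv_lhs => rw [← b.sum_repr v, Fin.sum_univ_castSucc]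
  simp only [hv, zero_smul, sum_const_zero, zero_add]

theorem repr_sum_smul_castSucc (c : Fin n → R) (k : Fin n) :
    b.repr (∑ j, c j • b j.castSucc) k.castSucc = c k := by
  simp [Finsupp.single_apply]

end Module.Basis

namespace Heisenberg

def partner {m : ℕ} (i : Fin (2 * m)) : Fin (2 * m) :=
  if h : (i : ℕ) < m then ⟨i + m, by omega⟩ else ⟨i - m, by omega⟩

theorem val_partner {m : ℕ} (i : Fin (2 * m)) :
    (partner i : ℕ) = if (i : ℕ) < m then (i : ℕ) + m else (i : ℕ) - m := by
  unfold partner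
  split_ifs <;> rfl

theorem partner_partner {m : ℕ} (i : Fin (2 * m)) : partner (partner i) = i := by
  ext
  rw [val_partner, val_partner]
  split_ifs <;> omega

variable {F L : Type*} [Field F] [LieRing L] [LieAlgebra F L] {m : ℕ}

def IsStandardBasis (b : Module.Basis (Fin (2*m+1)) F L) : Prop :=
  ∀ i j : Fin (2*m+1), ⁅b i, b j⁆ =
    if (j : ℕ) = (i : ℕ) + m ∧ (i : ℕ) < m then b (Fin.last (2*m))
    else if (i : ℕ) = (j : ℕ) + m ∧ (j : ℕ) < m then - b (Fin.last (2*m))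
    else 0

variable (b : Module.Basis (Fin (2*m+1)) F L)

def alternatingDerivations : Submodule F (LieDerivation F L L) where
  carrier := {ψ | ψ (b (Fin.last (2*m))) = 0 ∧ ∀ g, ⁅g, ψ g⁆ = 0}
  add_mem' := by
    rintro ψ φ ⟨hψ, hψ'⟩ ⟨hφ, hφ'⟩
    exact ⟨by simp [hψ, hφ], fun g => by simp [hψ', hφ']⟩
  zero_mem' := by simp
  smul_mem' := by
    rintro c ψ ⟨hψ, hψ'⟩
    exact ⟨by simp [hψ], fun g => by simp [hψ']⟩

noncomputable def bracketMatrix :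
    LieDerivation F L L →ₗ[F] Matrix (Fin (2*m)) (Fin (2*m)) F where
  toFun ψ := Matrix.of fun i j => b.repr ⁅b i.castSucc, ψ (b j.castSucc)⁆ (Fin.last (2*m))
  map_add' ψ φ := by ext; simp
  map_smul' c ψ := by ext; simp

variable {b}

theorem bracketMatrix_mem_alternatingMatrices {ψ : LieDerivation F L L}
    (hψ : ψ ∈ alternatingDerivations b) :
    bracketMatrix b ψ ∈ alternatingMatrices F (Fin (2*m)) :=
  ⟨fun i j => by
    have hskew := lie_apply_eq_neg_of_lie_apply_self_eq_zero (f := (ψ : L →ₗ[F] L)) hψ.2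
      (b i.castSucc) (b j.castSucc)
    simp only [LieDerivation.coeFn_coe] at hskew
    simp only [bracketMatrix, LinearMap.coe_mk, AddHom.coe_mk, Matrix.of_apply, hskew, map_neg,
      Finsupp.neg_apply],
   fun i => by simp [bracketMatrix, hψ.2]⟩

variable (hb : IsStandardBasis b)
include hb

theorem lie_last_left (x : L) : ⁅b (Fin.last (2*m)), x⁆ = 0 := by
  suffices LieModule.toEnd F L L (b (Fin.last (2*m))) = 0 from LinearMap.congr_fun this x
  refine b.ext fun j => ?_
  rw [LieModule.toEnd_apply_apply, hb]
  simp only [Fin.val_last]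
  split_ifs <;> first | omega | simp

theorem lie_last_right (x : L) : ⁅x, b (Fin.last (2*m))⁆ = 0 := by
  rw [← lie_skew, lie_last_left hb, neg_zero]

theorem lie_mem_span_last (x y : L) : ⁅x, y⁆ ∈ F ∙ b (Fin.last (2*m)) := by
  rw [← b.sum_repr x, ← b.sum_repr y]
  simp only [sum_lie, lie_sum, smul_lie, lie_smul, smul_sum]
  refine Submodule.sum_mem _ fun i _ => Submodule.sum_mem _ fun j _ =>
    Submodule.smul_mem _ _ (Submodule.smul_mem _ _ ?_)
  rw [hb]
  split_ifs <;> simp [Submodule.mem_span_singleton_self]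

theorem lie_eq_repr_last_smul (x y : L) :
    ⁅x, y⁆ = b.repr ⁅x, y⁆ (Fin.last (2*m)) • b (Fin.last (2*m)) := by
  obtain ⟨c, hc⟩ := Submodule.mem_span_singleton.mp (lie_mem_span_last hb x y)
  simp [← hc]

theorem forall_lie_apply_eq_apply_iff {P : L → L} (c : L → F)
    (hP : ∀ g, P g = c g • b (Fin.last (2*m))) (hc : c (b (Fin.last (2*m))) ≠ 0)
    (ψ : LieDerivation F L L) :
    (∀ g, ⁅g, ψ g⁆ = ψ (P g)) ↔ ψ ∈ alternatingDerivations b := by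
  have hψP : ∀ g, ψ (P g) = c g • ψ (b (Fin.last (2*m))) := fun g => by rw [hP, map_smul]
  constructor
  · intro h
    have hlast : ψ (b (Fin.last (2*m))) = 0 := by
      have h0 := h (b (Fin.last (2*m)))
      rw [lie_last_left hb, hψP] at h0
      exact (smul_eq_zero.mp h0.symm).resolve_left hc
    exact ⟨hlast, fun g => by rw [h, hψP, hlast, smul_zero]⟩
  · rintro ⟨hlast, hself⟩ g
    rw [hself, hψP, hlast, smul_zero]

theorem mem_alternatingDerivations_of_eq_lie {ψ : LieDerivation F L L} {h : L}
    (hψ : ∀ g, ψ g = ⁅h, g⁆) : ψ ∈ alternatingDerivations b := by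
  refine ⟨by rw [hψ, lie_last_right hb], fun g => ?_⟩
  rw [hψ, lie_eq_repr_last_smul hb h g, lie_smul, lie_last_right hb, smul_zero]

variable [CharP F 2]

theorem lie_basis_castSucc (i j : Fin (2*m)) :
    ⁅b i.castSucc, b j.castSucc⁆ = if j = partner i then b (Fin.last (2*m)) else 0 := by
  rw [hb]
  simp only [Fin.val_castSucc, Fin.ext_iff, val_partner]
  split_ifs <;> first | omega | simp [neg_eq_self_of_charTwo F]

theorem lie_basis_castSucc_left (i : Fin (2*m)) (x : L) :
    ⁅b i.castSucc, x⁆ = b.repr x (partner i).castSucc • b (Fin.last (2*m)) := by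
  conv_lhs => rw [← b.sum_repr x, Fin.sum_univ_castSucc]
  simp only [lie_add, lie_sum, lie_smul, lie_basis_castSucc hb, lie_last_right hb, smul_ite,
    smul_zero, sum_ite_eq', mem_univ, if_true, add_zero]

theorem exists_lie_basis_castSucc_eq (t : Fin (2*m) → F) :
    ∃ h : L, ∀ j, ⁅h, b j.castSucc⁆ = t j • b (Fin.last (2*m)) := by
  refine ⟨∑ k, t (partner k) • b k.castSucc, fun j => ?_⟩
  rw [← lie_skew, lie_basis_castSucc_left hb, b.repr_sum_smul_castSucc, partner_partner,
    neg_eq_self_of_charTwo F]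

theorem bracketMatrix_eq_zero_iff {ψ : LieDerivation F L L}
    (hψ : ψ (b (Fin.last (2*m))) = 0) :
    bracketMatrix b ψ = 0 ↔ ∃ h : L, ∀ g, ψ g = ⁅h, g⁆ := by
  constructor
  · intro h0
    have hcentral : ∀ j : Fin (2*m), ψ (b j.castSucc) =
        b.repr (ψ (b j.castSucc)) (Fin.last (2*m)) • b (Fin.last (2*m)) := fun j =>
      b.eq_repr_last_smul_of_repr_castSucc_eq_zero fun k => by
        simpa [bracketMatrix, lie_basis_castSucc_left hb, partner_partner] using
          congr_fun (congr_fun h0 (partner k)) j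
    obtain ⟨h, hh⟩ := exists_lie_basis_castSucc_eq hb
      fun j => b.repr (ψ (b j.castSucc)) (Fin.last (2*m))
    have hψh : (ψ : L →ₗ[F] L) = LieModule.toEnd F L L h := b.ext fun j => by
      induction j using Fin.lastCases with
      | last => simp [hψ, lie_last_right hb]
      | cast j => rw [LieModule.toEnd_apply_apply, hh, ← hcentral]; rfl
    exact ⟨h, fun g => LinearMap.congr_fun hψh g⟩
  · rintro ⟨h, hh⟩
    ext i j
    simp only [bracketMatrix, LinearMap.coe_mk, AddHom.coe_mk, Matrix.of_apply, hh,
      Matrix.zero_apply]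
    rw [lie_eq_repr_last_smul hb h, lie_smul, lie_last_right hb, smul_zero, map_zero,
      Finsupp.zero_apply]

theorem exists_mem_alternatingDerivations_bracketMatrix_eq
    {A : Matrix (Fin (2*m)) (Fin (2*m)) F} (hA : A ∈ alternatingMatrices F (Fin (2*m))) :
    ∃ ψ ∈ alternatingDerivations b, bracketMatrix b ψ = A := by
  obtain ⟨hskew, hdiag⟩ := hA
  -- `[e_i, e_k] = z` exactly when `k = partner i`, hence column `j` of `A` is stored at partners.
  let f : L →ₗ[F] L :=
    b.constr F (Fin.snoc (fun j => ∑ k, A (partner k) j • b k.castSucc) 0)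
  have hf_last : f (b (Fin.last (2*m))) = 0 := by simp [f]
  have hf_basis : ∀ i j, ⁅b i.castSucc, f (b j.castSucc)⁆ = A i j • b (Fin.last (2*m)) := by
    intro i j
    simp only [f, b.constr_basis, Fin.snoc_castSucc]
    rw [lie_basis_castSucc_left hb, b.repr_sum_smul_castSucc, partner_partner]
  have hself : ∀ g, ⁅g, f g⁆ = 0 := by
    refine lie_apply_self_eq_zero_of_basis b f (fun i j => ?_) (fun i => ?_)
    · induction i using Fin.lastCases <;> induction j using Fin.lastCases
      case cast.cast i j => rw [hf_basis, hf_basis, hskew, neg_smul]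
      all_goals simp only [hf_last, lie_zero, lie_last_left hb, neg_zero]
    · induction i using Fin.lastCases <;> simp [hf_last, hf_basis, hdiag]
  have hf_bracket : ∀ x y, f ⁅x, y⁆ = 0 := fun x y => by
    rw [lie_eq_repr_last_smul hb, map_smul, hf_last, smul_zero]
  refine ⟨⟨f, leibniz_of_lie_apply_self_eq_zero hf_bracket hself⟩, ⟨hf_last, hself⟩, ?_⟩
  ext i j
  simp [bracketMatrix, hf_basis]

theorem finrank_quotient_eq_choose (Inn : Submodule F (LieDerivation F L L))
    (hInn : ∀ D : LieDerivation F L L, D ∈ Inn ↔ ∃ h : L, ∀ g : L, D g = ⁅h, g⁆) :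
    Module.finrank F (alternatingDerivations b ⧸ Inn.comap (alternatingDerivations b).subtype) =
      (2*m).choose 2 := by
  set Φ := (bracketMatrix b).domRestrict (alternatingDerivations b)
  have hker : LinearMap.ker Φ = Inn.comap (alternatingDerivations b).subtype := by
    ext ψ
    simp [Φ, hInn, bracketMatrix_eq_zero_iff hb ψ.2.1]
  have hrange : LinearMap.range Φ = alternatingMatrices F (Fin (2*m)) := by
    refine le_antisymm ?_ fun A hA => ?_
    · rintro _ ⟨ψ, rfl⟩
      exact bracketMatrix_mem_alternatingMatrices ψ.2
    · obtain ⟨ψ, hψ, rfl⟩ := exists_mem_alternatingDerivations_bracketMatrix_eq hb hA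
      exact ⟨⟨ψ, hψ⟩, rfl⟩
  rw [← hker, Φ.quotKerEquivRange.finrank_eq, hrange, finrank_alternatingMatrices,
    Fintype.card_fin]

end Heisenberg

/-- **Statement 4.** Let `F` be an algebraically closed field of characteristic `2`, let
`m ≥ 1`, and let `λ ∈ F^{2m+1}` with `λ_{2m+1} ≠ 0`.  The restricted `[2]`-map on `h_m`
determined by `λ` is `g^{[2]} = (Σ_i a_i² λ_i + Σ_{j=1}^m a_j a_{m+j}) e_{2m+1}` for
`g = Σ_i a_i e_i`.  Consider the subspace `D_λ` of derivations `ψ` of `h_m` satisfying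
`[g, ψ(g)] = ψ(g^{[2]})` for all `g`; this subspace contains all inner derivations.  Then
`D_λ / Inn(h_m) = H¹_*(h_m^λ(2), h_m^λ(2))` has dimension `2m² − m` over `F`. -/
theorem heisenberg_restricted_H1_dim_char_two_lam_ne_zero
    (F : Type*) [Field F] [CharP F 2]
    (m : ℕ)
    (L : Type*) [LieRing L] [LieAlgebra F L]
    (b : Module.Basis (Fin (2*m+1)) F L)
    (hb : ∀ i j : Fin (2*m+1), ⁅b i, b j⁆ =
      if (j : ℕ) = (i : ℕ) + m ∧ (i : ℕ) < m then b (Fin.last (2*m))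
      else if (i : ℕ) = (j : ℕ) + m ∧ (j : ℕ) < m then - b (Fin.last (2*m))
      else 0)
    (lam : Fin (2*m+1) → F) (hlam : lam (Fin.last (2*m)) ≠ 0)
    (P : L → L)
    (hP : ∀ g : L, P g =
      (∑ i, (b.repr g i)^2 * lam i +
        ∑ j : Fin m, b.repr g ⟨(j : ℕ), by omega⟩ * b.repr g ⟨m + (j : ℕ), by omega⟩) •
      b (Fin.last (2*m)))
    (Dlam : Submodule F (LieDerivation F L L))
    (hD : ∀ ψ : LieDerivation F L L, ψ ∈ Dlam ↔
      ∀ g : L, ⁅g, ψ g⁆ = ψ (P g))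
    (Inn : Submodule F (LieDerivation F L L))
    (hInn : ∀ D : LieDerivation F L L, D ∈ Inn ↔ ∃ h : L, ∀ g : L, D g = ⁅h, g⁆) :
    Inn ≤ Dlam ∧
    Module.finrank F (↥Dlam ⧸ Submodule.comap Dlam.subtype Inn) = 2*m^2 - m := by
  have hDlam : Dlam = Heisenberg.alternatingDerivations b := by
    ext ψ
    rw [hD, Heisenberg.forall_lie_apply_eq_apply_iff hb _ hP]
    have hcross : ∀ j : Fin m, Fin.last (2*m) ≠ ⟨j, by omega⟩ := fun j => by
      simp only [ne_eq, Fin.ext_iff, Fin.val_last]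
      omega
    simpa [Finsupp.single_apply, hcross] using hlam
  subst hDlam
  refine ⟨fun D hDInn => ?_, ?_⟩
  · obtain ⟨h, hh⟩ := (hInn D).1 hDInn
    exact Heisenberg.mem_alternatingDerivations_of_eq_lie hb hh
  · rw [Heisenberg.finrank_quotient_eq_choose hb Inn hInn, Nat.choose_two_right, mul_assoc,
      Nat.mul_div_cancel_left _ two_pos, Nat.mul_sub_one, sq, mul_left_comm]
end

section
/- Let F be an algebraically closed field of characteristic p > 2, let m ≥ 1, and let λ = (λ_1, …, λ_{2m+1}) ∈ F^{2m+1}. Then the set of maps { g ↦ ψ(g^{[p]}) : ψ a derivation of h_m } is exactly the F-linear span of the single map σ_λ defined by σ_λ(Σ_{i=1}^{2m+1} a_i e_i) = (Σ_{i=1}^{2m+1} λ_i a_i^p) e_{2m+1}. In particular this set is a subspace of dimension 1 if λ ≠ 0 and is {0} if λ = 0. -/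
/-!
Every derivation `ψ` of `h_m` maps the centre `F e_{2m+1}` into itself, because
`e_{2m+1} = ⁅e_1, e_{m+1}⁆` and all brackets lie in `F e_{2m+1}`. Since `g^{[p]} = σ_λ(g)` is a
multiple of `e_{2m+1}`, `ψ(g^{[p]}) = t σ_λ(g)` when `ψ e_{2m+1} = t e_{2m+1}`. Conversely the
diagonal derivation acting by `1` on `e_1, …, e_m, e_{2m+1}` and by `0` on `e_{m+1}, …, e_{2m}`
fixes `e_{2m+1}`, and its multiples realise every `t`.
-/

open Module

section General

variable {R L ι : Type*} [CommRing R] [LieRing L] [LieAlgebra R L]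

theorem lie_mem_of_forall_basis_lie_mem (b : Basis ι R L) {N : Submodule R L}
    (h : ∀ i j, ⁅b i, b j⁆ ∈ N) (x y : L) : ⁅x, y⁆ ∈ N := by
  have hbracket : (LieModule.toEnd R L L : L →ₗ[R] End R L).compr₂ N.mkQ = 0 :=
    LinearMap.ext_basis b b fun i j => by simpa using h i j
  simpa using LinearMap.congr_fun₂ hbracket x y

namespace LieDerivation

def ofBasis (b : Basis ι R L) (D : L →ₗ[R] L)
    (h : ∀ i j, D ⁅b i, b j⁆ = ⁅D (b i), b j⁆ + ⁅b i, D (b j)⁆) : LieDerivation R L L where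
  toLinearMap := D
  leibniz' x y := by
    have hleibniz : (LieModule.toEnd R L L : L →ₗ[R] End R L).compr₂ D =
        (LieModule.toEnd R L L : L →ₗ[R] End R L) ∘ₗ D +
          (LieModule.toEnd R L L : L →ₗ[R] End R L).compl₂ D :=
      LinearMap.ext_basis b b fun i j => by simpa using h i j
    have := LinearMap.congr_fun₂ hleibniz x y
    simp only [LinearMap.compr₂_apply, LinearMap.add_apply, LinearMap.coe_comp,
      Function.comp_apply, LinearMap.compl₂_apply, LieHom.coe_toLinearMap,
      LieModule.toEnd_apply_apply] at this
    rw [this, ← lie_skew (D x) y, sub_eq_add_neg, add_comm]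

theorem apply_lie_mem_of_forall_lie_mem (ψ : LieDerivation R L L) {N : Submodule R L}
    (hN : ∀ x y : L, ⁅x, y⁆ ∈ N) (x y : L) : ψ ⁅x, y⁆ ∈ N := by
  rw [apply_lie_eq_add]
  exact N.add_mem (hN _ _) (hN _ _)

theorem setOf_comp_smul_eq_span {z : L} (c : L → R)
    (hψ : ∀ ψ : LieDerivation R L L, ψ z ∈ R ∙ z) (hD : ∃ D : LieDerivation R L L, D z = z) :
    {f : L → L | ∃ ψ : LieDerivation R L L, f = fun g => ψ (c g • z)} =
      ↑(R ∙ fun g => c g • z) := by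
  ext f
  simp only [Set.mem_ofPred_eq, SetLike.mem_coe, Submodule.mem_span_singleton]
  constructor
  · rintro ⟨ψ, rfl⟩
    obtain ⟨t, ht⟩ := Submodule.mem_span_singleton.mp (hψ ψ)
    exact ⟨t, funext fun g => by simp [← ht, smul_comm t]⟩
  · rintro ⟨t, rfl⟩
    obtain ⟨D, hDz⟩ := hD
    exact ⟨t • D, funext fun g => by simp [hDz, smul_comm t]⟩

end LieDerivation

end General

section Heisenberg

variable {R L : Type*} [CommRing R] [LieRing L] [LieAlgebra R L] {m : ℕ}

def IsHeisenbergBasis (b : Basis (Fin (2*m+1)) R L) : Prop :=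
  ∀ i j : Fin (2*m+1), ⁅b i, b j⁆ =
    if (j : ℕ) = (i : ℕ) + m ∧ (i : ℕ) < m then b (Fin.last (2*m))
    else if (i : ℕ) = (j : ℕ) + m ∧ (j : ℕ) < m then - b (Fin.last (2*m))
    else 0

namespace IsHeisenbergBasis

variable {b : Basis (Fin (2*m+1)) R L}

theorem lie_mem_span_last (hb : IsHeisenbergBasis b) (x y : L) :
    ⁅x, y⁆ ∈ R ∙ b (Fin.last (2*m)) := by
  refine lie_mem_of_forall_basis_lie_mem b (fun i j => ?_) x y
  rw [hb]
  split_ifs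
  · exact Submodule.mem_span_singleton_self _
  · exact Submodule.neg_mem _ (Submodule.mem_span_singleton_self _)
  · exact Submodule.zero_mem _

theorem derivation_apply_last_mem (hb : IsHeisenbergBasis b) (hm : 1 ≤ m)
    (ψ : LieDerivation R L L) : ψ (b (Fin.last (2*m))) ∈ R ∙ b (Fin.last (2*m)) := by
  have hlast : ⁅b ⟨0, by omega⟩, b ⟨m, by omega⟩⁆ = b (Fin.last (2*m)) := by
    rw [hb, if_pos ⟨(zero_add m).symm, hm⟩]
  simpa only [hlast] using ψ.apply_lie_mem_of_forall_lie_mem hb.lie_mem_span_last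
    (b ⟨0, by omega⟩) (b ⟨m, by omega⟩)

theorem exists_derivation_apply_last (hb : IsHeisenbergBasis b) :
    ∃ D : LieDerivation R L L, D (b (Fin.last (2*m))) = b (Fin.last (2*m)) := by
  let w : Fin (2*m+1) → R := fun i => if (i : ℕ) < m ∨ (i : ℕ) = 2*m then 1 else 0
  let D : L →ₗ[R] L := b.constr R fun i => w i • b i
  have hD : ∀ i, D (b i) = w i • b i := b.constr_basis R _
  have hDlast : D (b (Fin.last (2*m))) = b (Fin.last (2*m)) := by simp [hD, w]
  refine ⟨LieDerivation.ofBasis b D fun i j => ?_, hDlast⟩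
  rw [hD, hD, smul_lie, lie_smul, ← add_smul, hb]
  have hw : ∀ k l : Fin (2*m+1), (l : ℕ) = k + m → (k : ℕ) < m → w k + w l = 1 :=
    fun k l hl hk => by
      simp only [w, if_pos (Or.inl hk), if_neg (show ¬((l : ℕ) < m ∨ (l : ℕ) = 2*m) by omega)]
      simp
  split_ifs with h₁ h₂
  · rw [hDlast, hw i j h₁.1 h₁.2, one_smul]
  · rw [map_neg, hDlast, add_comm (w i), hw j i h₂.1 h₂.2, one_smul]
  · simp

end IsHeisenbergBasis

end Heisenberg

theorem heisenberg_ind1_image_p_gt_two_general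
    (F : Type*) [Field F] (p : ℕ) (hp : p.Prime)
    (m : ℕ) (hm : 1 ≤ m)
    (L : Type*) [LieRing L] [LieAlgebra F L]
    (b : Module.Basis (Fin (2*m+1)) F L)
    (hb : ∀ i j : Fin (2*m+1), ⁅b i, b j⁆ =
      if (j : ℕ) = (i : ℕ) + m ∧ (i : ℕ) < m then b (Fin.last (2*m))
      else if (i : ℕ) = (j : ℕ) + m ∧ (j : ℕ) < m then - b (Fin.last (2*m))
      else 0)
    (lam : Fin (2*m+1) → F)
    (P : L → L)
    (hP : ∀ g : L, P g = (∑ i, (b.repr g i)^p * lam i) • b (Fin.last (2*m)))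
    (sig : L → L)
    (hsig : ∀ g : L, sig g = (∑ i, lam i * (b.repr g i)^p) • b (Fin.last (2*m))) :
    {f : L → L | ∃ ψ : LieDerivation F L L, f = fun g => ψ (P g)} =
      ↑(Submodule.span F {sig}) ∧
    (lam ≠ 0 → Module.finrank F ↥(Submodule.span F {sig}) = 1) ∧
    (lam = 0 →
      {f : L → L | ∃ ψ : LieDerivation F L L, f = fun g => ψ (P g)} = {0}) := by
  set z := b (Fin.last (2*m))
  set c : L → F := fun g => ∑ i, lam i * (b.repr g i)^p
  obtain rfl : sig = fun g => c g • z := funext hsig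
  obtain rfl : P = fun g => c g • z := funext fun g => by simp only [hP, c, mul_comm]
  have hb' : IsHeisenbergBasis b := hb
  have hset := LieDerivation.setOf_comp_smul_eq_span c
    (hb'.derivation_apply_last_mem hm) hb'.exists_derivation_apply_last
  refine ⟨hset, fun hlam => finrank_span_singleton fun hsig0 => ?_, fun hlam => ?_⟩
  · obtain ⟨i, hi⟩ := Function.ne_iff.mp hlam
    have hsig_i := congr_fun hsig0 (b i)
    simp only [c, z, b.repr_self, Finsupp.single_apply, ite_pow, one_pow,
      zero_pow hp.ne_zero, mul_ite, mul_one, mul_zero, Finset.sum_ite_eq, Finset.mem_univ,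
      if_true, Pi.zero_apply, smul_eq_zero] at hsig_i
    exact hi (hsig_i.resolve_right (b.ne_zero _))
  · rw [hset]
    simp [c, hlam, ← Pi.zero_def]

/-- Let `F` be an algebraically closed field of characteristic `p > 2`,
let `m ≥ 1`, and let `λ ∈ F^{2m+1}`, with associated `[p]`-map
`g^{[p]} = (Σ_i a_i^p λ_i) e_{2m+1}` for `g = Σ_i a_i e_i`.  Then the set of maps
`{ g ↦ ψ(g^{[p]}) : ψ a derivation of h_m }` is exactly the `F`-linear span of the single
map `σ_λ` defined by `σ_λ(Σ_i a_i e_i) = (Σ_i λ_i a_i^p) e_{2m+1}`.  In particular this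
set is a subspace of dimension `1` if `λ ≠ 0` and is `{0}` if `λ = 0`. -/
theorem heisenberg_ind1_image_p_gt_two
    (F : Type*) [Field F] [IsAlgClosed F] (p : ℕ) [CharP F p] (hp : p.Prime) (hp2 : 2 < p)
    (m : ℕ) (hm : 1 ≤ m)
    (L : Type*) [LieRing L] [LieAlgebra F L]
    (b : Module.Basis (Fin (2*m+1)) F L)
    (hb : ∀ i j : Fin (2*m+1), ⁅b i, b j⁆ =
      if (j : ℕ) = (i : ℕ) + m ∧ (i : ℕ) < m then b (Fin.last (2*m))
      else if (i : ℕ) = (j : ℕ) + m ∧ (j : ℕ) < m then - b (Fin.last (2*m))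
      else 0)
    (lam : Fin (2*m+1) → F)
    (P : L → L)
    (hP : ∀ g : L, P g = (∑ i, (b.repr g i)^p * lam i) • b (Fin.last (2*m)))
    (sig : L → L)
    (hsig : ∀ g : L, sig g = (∑ i, lam i * (b.repr g i)^p) • b (Fin.last (2*m))) :
    {f : L → L | ∃ ψ : LieDerivation F L L, f = fun g => ψ (P g)} =
      ↑(Submodule.span F {sig}) ∧
    (lam ≠ 0 → Module.finrank F ↥(Submodule.span F {sig}) = 1) ∧
    (lam = 0 →
      {f : L → L | ∃ ψ : LieDerivation F L L, f = fun g => ψ (P g)} = {0}) :=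
  heisenberg_ind1_image_p_gt_two_general F p hp m hm L b hb lam P hP sig hsig
end
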